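/- arXiv:2012.02683 — 7 statements merged into one kernel-verified Lean document; each statement's English description precedes it below -/
import Mathlib

section
/- Let fL, fU : ℝⁿ → ℝ with fL ≤ fU pointwise, and X ⊆ ℝⁿ nonempty. Assume fL is bounded from below on X. Then for every pair (εL, εU) with 0 ≤ εL ≤ εU and not both zero (i.e., 0 ≺_LU E), there exists x* ∈ X such that there is no x ∈ X with fL(x) ≤ fL(x*) − εU, fU(x) ≤ fU(x*) − εL and at least one inequality strict; i.e., the problem admits an E-LU-solution. -/
theorem exists_E_LU_solution (n : ℕ) (fL fU : (Fin n → ℝ) → ℝ)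
    (hf : ∀ x, fL x ≤ fU x) (X : Set (Fin n → ℝ)) (hX : X.Nonempty)
    (hbdd : BddBelow (fL '' X)) (εL εU : ℝ)
    (hεL : 0 ≤ εL) (hε : εL ≤ εU) (hne : (εL, εU) ≠ (0, 0)) :
    ∃ xs ∈ X, ¬ ∃ x ∈ X, (fL x ≤ fL xs - εU ∧ fU x ≤ fU xs - εL) ∧
      (fL x < fL xs - εU ∨ fU x < fU xs - εL) := by
  have hεU : 0 < εU := by
    rcases lt_or_eq_of_le (hεL.trans hε) with h | h
    · exact h
    · exfalso
      apply hne
      have hεL0 : εL = 0 := le_antisymm (h ▸ hε) hεL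
      simp [hεL0, h.symm]
  set m := sInf (fL '' X) with hm
  have hne' : (fL '' X).Nonempty := hX.image _
  obtain ⟨y, hy, hylt⟩ : ∃ y ∈ fL '' X, y < m + εU := by
    by_contra h
    push_neg at h
    have := csInf_le hbdd (hne'.some_mem)
    have h2 : m + εU ≤ m := le_csInf hne' (fun b hb => by
      have := h b hb; linarith) |>.trans (le_refl m)
    linarith
  obtain ⟨xs, hxs, hfxs⟩ := hy
  refine ⟨xs, hxs, ?_⟩
  rintro ⟨x, hx, ⟨h1, _⟩, _⟩
  have : m ≤ fL x := csInf_le hbdd ⟨x, hx, rfl⟩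
  rw [← hfxs] at hylt
  linarith
end

section
/- Let fL(x) = x₁² + (x₁x₂ − 1)² and fU(x) = 2x₁² + (x₁x₂ − 1)² for x = (x₁, x₂) ∈ ℝ². Then for every x* ∈ ℝ² there exists x ∈ ℝ² with fL(x) < fL(x*) and fU(x) < fU(x*); that is, the unconstrained interval problem with objective [fL, fU] has no weakly LU-solution (and hence no LU-solution), even though fL and fU are bounded below (both are positive). -/
theorem no_weakly_LU_solution_example :
    ∀ xs : ℝ × ℝ, ∃ x : ℝ × ℝ,
      x.1 ^ 2 + (x.1 * x.2 - 1) ^ 2 < xs.1 ^ 2 + (xs.1 * xs.2 - 1) ^ 2 ∧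
      2 * x.1 ^ 2 + (x.1 * x.2 - 1) ^ 2 < 2 * xs.1 ^ 2 + (xs.1 * xs.2 - 1) ^ 2 := by
  intro xs
  set c : ℝ := xs.1 ^ 2 + (xs.1 * xs.2 - 1) ^ 2 with hc
  have hcpos : 0 < c := by
    rcases eq_or_ne xs.1 0 with h | h
    · simp [hc, h]
    · have h1 : 0 < xs.1 ^ 2 := by positivity
      have h2 : 0 ≤ (xs.1 * xs.2 - 1) ^ 2 := sq_nonneg _
      linarith
  set ε : ℝ := Real.sqrt (c / 3) with hε
  have hεpos : 0 < ε := Real.sqrt_pos.2 (by linarith)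
  have hεsq : ε ^ 2 = c / 3 := by
    rw [hε, sq, Real.mul_self_sqrt (by linarith)]
  refine ⟨(ε, ε⁻¹), ?_, ?_⟩
  · have : ε * ε⁻¹ = 1 := mul_inv_cancel₀ hεpos.ne'
    simp only [this]
    norm_num
    linarith
  · have h1 : ε * ε⁻¹ = 1 := mul_inv_cancel₀ hεpos.ne'
    have h2 : c ≤ 2 * xs.1 ^ 2 + (xs.1 * xs.2 - 1) ^ 2 := by
      have := sq_nonneg xs.1; rw [hc]; linarith
    simp only [h1]
    norm_num
    linarith
end

section
/- Let fL, fU : ℝⁿ → ℝ be lower semicontinuous with fL ≤ fU pointwise, X ⊆ ℝⁿ nonempty and closed, and fL bounded from below on X. Then for every (εL, εU) with 0 < εL ≤ εU, there exists x̄ ∈ X such that there is no x ∈ X with fL(x) ≤ fL(x̄) − εU·‖x − x̄‖, fU(x) ≤ fU(x̄) − εL·‖x − x̄‖ and at least one inequality strict; i.e., x̄ is an E-quasi-LU-solution. -/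
/-- A lower semicontinuous function bounded below on a nonempty compact set
attains its minimum there. -/
lemma lsc_exists_min {E : Type*} [MetricSpace E]
    (K : Set E) (hK : IsCompact K) (hne : K.Nonempty)
    (g : E → ℝ) (hg : LowerSemicontinuous g) (hbd : BddBelow (g '' K)) :
    ∃ x ∈ K, ∀ y ∈ K, g x ≤ g y := by
  set m : ℝ := sInf (g '' K) with hm
  have hneim : (g '' K).Nonempty := hne.image g
  have hseq : ∀ n : ℕ, ∃ x ∈ K, g x < m + 1 / (n + 1) := by
    intro n
    have hpos : (0 : ℝ) < 1 / (n + 1) := by positivity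
    have : m < m + 1 / (n + 1) := by linarith
    obtain ⟨z, hz, hz'⟩ := exists_lt_of_csInf_lt hneim this
    obtain ⟨x, hx, rfl⟩ := hz
    exact ⟨x, hx, hz'⟩
  choose u hu hgu using hseq
  obtain ⟨x, hxK, φ, hφ, hlim⟩ := hK.tendsto_subseq hu
  refine ⟨x, hxK, fun y hy => ?_⟩
  have hmy : m ≤ g y := csInf_le hbd ⟨y, hy, rfl⟩
  have hxm : g x ≤ m := by
    by_contra h
    push_neg at h
    obtain ⟨t, hmt, htx⟩ := exists_between h
    have hev : ∀ᶠ k in Filter.atTop, t < g (u (φ k)) :=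
      hlim.eventually (hg x t htx)
    have hten : Filter.Tendsto (fun k : ℕ => m + 1 / ((φ k : ℝ) + 1))
        Filter.atTop (nhds m) := by
      have h1 : Filter.Tendsto (fun k : ℕ => 1 / ((φ k : ℝ) + 1))
          Filter.atTop (nhds 0) := by
        apply Filter.Tendsto.comp tendsto_one_div_add_atTop_nhds_zero_nat
        exact hφ.tendsto_atTop
      simpa using (tendsto_const_nhds.add h1)
    have hev2 : ∀ᶠ k in Filter.atTop, m + 1 / ((φ k : ℝ) + 1) < t :=
      hten.eventually (gt_mem_nhds hmt)
    obtain ⟨k, hk1, hk2⟩ := (hev.and hev2).exists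
    have := hgu (φ k)
    linarith
  linarith

theorem exists_E_quasi_LU_solution (n : ℕ)
    (fL fU : EuclideanSpace ℝ (Fin n) → ℝ)
    (hfLlsc : LowerSemicontinuous fL) (hfUlsc : LowerSemicontinuous fU)
    (hf : ∀ x, fL x ≤ fU x)
    (X : Set (EuclideanSpace ℝ (Fin n))) (hXne : X.Nonempty) (hXcl : IsClosed X)
    (hbdd : BddBelow (fL '' X)) (εL εU : ℝ) (hεL : 0 < εL) (hε : εL ≤ εU) :
    ∃ xb ∈ X, ¬ ∃ x ∈ X,
      (fL x ≤ fL xb - εU * ‖x - xb‖ ∧ fU x ≤ fU xb - εL * ‖x - xb‖) ∧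
      (fL x < fL xb - εU * ‖x - xb‖ ∨ fU x < fU xb - εL * ‖x - xb‖) := by
  obtain ⟨x₀, hx₀⟩ := hXne
  obtain ⟨M, hM⟩ := hbdd
  have hMle : ∀ x ∈ X, M ≤ fL x := fun x hx => hM ⟨x, hx, rfl⟩
  set c : ℝ := εL / 2 with hc
  have hcpos : 0 < c := by positivity
  set g : EuclideanSpace ℝ (Fin n) → ℝ := fun x => fL x + c * ‖x - x₀‖ with hg
  have hglsc : LowerSemicontinuous g := by
    apply LowerSemicontinuous.add hfLlsc
    exact (Continuous.lowerSemicontinuous (by continuity))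
  set K : Set (EuclideanSpace ℝ (Fin n)) := {x ∈ X | g x ≤ fL x₀} with hK
  have hx₀K : x₀ ∈ K := by
    simp only [hK, Set.mem_setOf_eq, hg]
    refine ⟨hx₀, ?_⟩
    simp
  have hKcl : IsClosed K :=
    IsClosed.inter hXcl (hglsc.isClosed_preimage (fL x₀))
  have hKsub : K ⊆ Metric.closedBall x₀ ((fL x₀ - M) / c) := by
    intro x hx
    obtain ⟨hxX, hxg⟩ := hx
    have h1 : M ≤ fL x := hMle x hxX
    have h2 : c * ‖x - x₀‖ ≤ fL x₀ - M := by
      simp only [hg] at hxg; linarith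
    have : ‖x - x₀‖ ≤ (fL x₀ - M) / c := by
      rw [le_div_iff₀ hcpos]; linarith
    simpa [Metric.mem_closedBall, dist_eq_norm] using this
  have hKcomp : IsCompact K :=
    (isCompact_closedBall x₀ _).of_isClosed_subset hKcl hKsub
  have hKbd : BddBelow (g '' K) := by
    refine ⟨M, fun z hz => ?_⟩
    obtain ⟨x, hx, rfl⟩ := hz
    have h1 : M ≤ fL x := hMle x hx.1
    have h2 : 0 ≤ c * ‖x - x₀‖ := by positivity
    simp only [hg]; linarith
  obtain ⟨xb, hxbK, hxbmin⟩ := lsc_exists_min K hKcomp ⟨x₀, hx₀K⟩ g hglsc hKbd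
  -- xb is a global minimizer of g on X
  have hglobal : ∀ y ∈ X, g xb ≤ g y := by
    intro y hy
    by_cases hyK : g y ≤ fL x₀
    · exact hxbmin y ⟨hy, hyK⟩
    · push_neg at hyK
      have := hxbmin x₀ hx₀K
      have hgx₀ : g x₀ = fL x₀ := by simp [hg]
      linarith
  refine ⟨xb, hxbK.1, ?_⟩
  rintro ⟨x, hxX, ⟨h1, h2⟩, h3⟩
  have hnn : 0 ≤ ‖x - xb‖ := norm_nonneg _
  have h1' : fL x ≤ fL xb - εL * ‖x - xb‖ := by nlinarith
  by_cases hxe : x = xb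
  · subst hxe
    simp only [sub_self, norm_zero, mul_zero, sub_zero] at h3
    rcases h3 with h | h <;> linarith
  · have hpos : 0 < ‖x - xb‖ := by
      rw [norm_pos_iff]
      intro h
      exact hxe (sub_eq_zero.mp h)
    have htri : ‖x - x₀‖ ≤ ‖x - xb‖ + ‖xb - x₀‖ := by
      have he : x - x₀ = (x - xb) + (xb - x₀) := by abel
      rw [he]; exact norm_add_le _ _
    have hglb := hglobal x hxX
    simp only [hg] at hglb
    nlinarith [hglb, htri]
end

section
/- Let fL, fU : ℝⁿ → ℝ be convex with fL ≤ fU pointwise, X ⊆ ℝⁿ convex, and 0 ≤ εL ≤ εU. A point x* ∈ X is a weakly E-LU-solution (no x ∈ X with fL(x) < fL(x*) − εU and fU(x) < fU(x*) − εL) if and only if there exist μL ≥ 0, μU ≥ 0 with μL + μU = 1 such that μL·fL(x) + μU·fU(x) ≥ μL·fL(x*) + μU·fU(x*) − μL·εU − μU·εL for all x ∈ X. -/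
/-!
If the system `g i x < 0` (all `i`) has no solution on `X`, the set of vectors `y` that strictly
dominate some value vector `(g i x)ᵢ`, `x ∈ X`, is open and convex (by convexity of the `g i`) and
misses the origin. A functional separating it from the origin is negative on it; since the set is
an upper set, the functional has nonpositive coefficients, which after normalisation are the
weights. The theorem is the case of the two functions `fL - fL x* + εU` and `fU - fU x* + εL`.
-/

open Finset

variable {ι E : Type*}

lemma nonpos_of_forall_add_mul_neg {a b : ℝ} (h : ∀ t : ℝ, 0 ≤ t → a + t * b < 0) : b ≤ 0 := by
  by_contra! hb
  have ha : a < 0 := by simpa using h 0 le_rfl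
  have := h (-a / b) (div_nonneg (neg_nonneg.2 ha.le) hb.le)
  rw [div_mul_cancel₀ _ hb.ne'] at this
  linarith

lemma combo_lt_combo {a b u u' v v' : ℝ} (ha : 0 ≤ a) (hb : 0 ≤ b) (hab : a + b = 1)
    (hu : u < u') (hv : v < v') : a * u + b * v < a * u' + b * v' := by
  rcases ha.eq_or_lt with rfl | ha
  · rw [zero_add] at hab
    simpa [hab] using hv
  · nlinarith [mul_le_mul_of_nonneg_left hv.le hb]

lemma sum_mul_neg_of_mem_stdSimplex [Fintype ι] {μ a : ι → ℝ} (hμ : μ ∈ stdSimplex ℝ ι)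
    (ha : ∀ i, a i < 0) : ∑ i, μ i * a i < 0 := by
  obtain ⟨j, -, hj⟩ := exists_lt_of_sum_lt (s := univ) (f := 0) (g := μ) (by simp [hμ.2])
  refine (sum_lt_sum (g := 0) (fun i _ => mul_nonpos_of_nonneg_of_nonpos (hμ.1 i) (ha i).le)
    ⟨j, mem_univ j, mul_neg_of_pos_of_neg hj (ha j)⟩).trans_eq sum_const_zero

lemma exists_mem_stdSimplex_fin_two_iff {P : ℝ → ℝ → Prop} :
    (∃ μ ∈ stdSimplex ℝ (Fin 2), P (μ 0) (μ 1)) ↔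
      ∃ a b : ℝ, 0 ≤ a ∧ 0 ≤ b ∧ a + b = 1 ∧ P a b := by
  constructor
  · rintro ⟨μ, ⟨hμ, hsum⟩, h⟩
    exact ⟨_, _, hμ 0, hμ 1, by simpa [Fin.sum_univ_two] using hsum, h⟩
  · rintro ⟨a, b, ha, hb, hab, h⟩
    exact ⟨![a, b], ⟨Fin.forall_fin_two.2 ⟨ha, hb⟩, by simpa using hab⟩, h⟩

lemma exists_mem_stdSimplex_forall_pos_of_isUpperSet [Fintype ι] {C : Set (ι → ℝ)}
    (hC : IsUpperSet C) (hCne : C.Nonempty) (f : (ι → ℝ) →ₗ[ℝ] ℝ) (hf : ∀ y ∈ C, f y < 0) :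
    ∃ μ ∈ stdSimplex ℝ ι, ∀ y ∈ C, 0 < ∑ i, μ i * y i := by
  classical
  set ν : ι → ℝ := fun i => -f (Pi.single i 1)
  have hfν : ∀ y, f y = -∑ i, ν i * y i := fun y => by
    conv_lhs => rw [pi_eq_sum_univ' y, map_sum]
    simp [ν, mul_comm]
  obtain ⟨y₀, hy₀⟩ := hCne
  have hν : ∀ i, 0 ≤ ν i := by
    intro i
    refine neg_nonneg.2 (nonpos_of_forall_add_mul_neg (a := f y₀) fun t ht => ?_)
    have hmem : y₀ + t • Pi.single i 1 ∈ C :=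
      hC (le_add_of_nonneg_right (smul_nonneg ht (Pi.single_nonneg.2 zero_le_one))) hy₀
    simpa using hf _ hmem
  have hσ : 0 < ∑ i, ν i := by
    refine (sum_nonneg fun i _ => hν i).lt_of_ne fun h => ?_
    have := hf y₀ hy₀
    rw [eq_comm, sum_eq_zero_iff_of_nonneg fun i _ => hν i] at h
    simp [hfν, h] at this
  refine ⟨fun i => (∑ j, ν j)⁻¹ * ν i,
    ⟨fun i => mul_nonneg (inv_nonneg.2 hσ.le) (hν i), by rw [← mul_sum, inv_mul_cancel₀ hσ.ne']⟩,
    fun y hy => ?_⟩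
  have hfy := hf y hy
  rw [hfν] at hfy
  simp_rw [mul_assoc, ← mul_sum]
  exact mul_pos (inv_pos.2 hσ) (by linarith)

def strictUpperImage (X : Set E) (g : ι → E → ℝ) : Set (ι → ℝ) :=
  {y | ∃ x ∈ X, ∀ i, g i x < y i}

lemma isOpen_strictUpperImage [Finite ι] (X : Set E) (g : ι → E → ℝ) :
    IsOpen (strictUpperImage X g) := by
  have : strictUpperImage X g = ⋃ x ∈ X, Set.univ.pi fun i => Set.Ioi (g i x) := by
    ext y
    simp [strictUpperImage]
  rw [this]
  exact isOpen_biUnion fun x _ => isOpen_set_pi Set.finite_univ fun i _ => isOpen_Ioi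

lemma isUpperSet_strictUpperImage (X : Set E) (g : ι → E → ℝ) :
    IsUpperSet (strictUpperImage X g) :=
  fun _ _ hyz ⟨x, hx, hlt⟩ => ⟨x, hx, fun i => (hlt i).trans_le (hyz i)⟩

lemma convex_strictUpperImage [AddCommGroup E] [Module ℝ E] {X : Set E} (hX : Convex ℝ X)
    {g : ι → E → ℝ} (hg : ∀ i, ConvexOn ℝ X (g i)) : Convex ℝ (strictUpperImage X g) := by
  rintro y ⟨x, hx, hxy⟩ z ⟨x', hx', hxz⟩ a b ha hb hab
  refine ⟨a • x + b • x', hX hx hx' ha hb hab, fun i => ?_⟩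
  calc g i (a • x + b • x') ≤ a * g i x + b * g i x' := (hg i).2 hx hx' ha hb hab
    _ < a * y i + b * z i := combo_lt_combo ha hb hab (hxy i) (hxz i)
    _ = (a • y + b • z) i := rfl

theorem not_exists_forall_neg_iff_exists_mem_stdSimplex [Fintype ι] [Nonempty ι]
    [AddCommGroup E] [Module ℝ E] {X : Set E} (hX : Convex ℝ X) {g : ι → E → ℝ}
    (hg : ∀ i, ConvexOn ℝ X (g i)) :
    (¬ ∃ x ∈ X, ∀ i, g i x < 0) ↔ ∃ μ ∈ stdSimplex ℝ ι, ∀ x ∈ X, 0 ≤ ∑ i, μ i * g i x := by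
  refine ⟨fun hno => ?_, fun ⟨μ, hμ, hnonneg⟩ ⟨x, hx, hneg⟩ =>
    (hnonneg x hx).not_gt (sum_mul_neg_of_mem_stdSimplex hμ hneg)⟩
  classical
  rcases X.eq_empty_or_nonempty with rfl | ⟨x₀, hx₀⟩
  · exact ⟨_, single_mem_stdSimplex ℝ (Classical.arbitrary ι), by simp⟩
  have h0 : (0 : ι → ℝ) ∉ strictUpperImage X g := fun ⟨x, hx, hneg⟩ => hno ⟨x, hx, hneg⟩
  obtain ⟨f, hf⟩ := geometric_hahn_banach_open_point (convex_strictUpperImage hX hg)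
    (isOpen_strictUpperImage X g) h0
  rw [map_zero] at hf
  have hmem : ∀ x ∈ X, ∀ ε > 0, (fun i => g i x + ε) ∈ strictUpperImage X g :=
    fun x hx ε hε => ⟨x, hx, fun i => lt_add_of_pos_right _ hε⟩
  obtain ⟨μ, hμ, hpos⟩ := exists_mem_stdSimplex_forall_pos_of_isUpperSet
    (isUpperSet_strictUpperImage X g) ⟨_, hmem x₀ hx₀ 1 one_pos⟩ f.toLinearMap hf
  refine ⟨μ, hμ, fun x hx => le_of_forall_pos_lt_add fun ε hε => ?_⟩
  have := hpos _ (hmem x hx ε hε)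
  simpa only [mul_add, sum_add_distrib, ← sum_mul, hμ.2, one_mul] using this

theorem weakly_E_LU_scalarization_general (n : ℕ) (fL fU : (Fin n → ℝ) → ℝ)
    (hfL : ConvexOn ℝ Set.univ fL) (hfU : ConvexOn ℝ Set.univ fU)
    (X : Set (Fin n → ℝ)) (hX : Convex ℝ X)
    (εL εU : ℝ) (xs : Fin n → ℝ) :
    (¬ ∃ x ∈ X, fL x < fL xs - εU ∧ fU x < fU xs - εL) ↔
    (∃ μL μU : ℝ, 0 ≤ μL ∧ 0 ≤ μU ∧ μL + μU = 1 ∧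
      ∀ x ∈ X, μL * fL x + μU * fU x ≥
        μL * fL xs + μU * fU xs - μL * εU - μU * εL) := by
  set g : Fin 2 → (Fin n → ℝ) → ℝ :=
    ![fun x => fL x + (εU - fL xs), fun x => fU x + (εL - fU xs)]
  have hg : ∀ i, ConvexOn ℝ X (g i) := Fin.forall_fin_two.2
    ⟨(hfL.subset (Set.subset_univ X) hX).add_const _,
      (hfU.subset (Set.subset_univ X) hX).add_const _⟩
  have hneg : ∀ x, (fL x < fL xs - εU ∧ fU x < fU xs - εL) ↔ ∀ i, g i x < 0 := fun x => by
    simp only [Fin.forall_fin_two, g, Matrix.cons_val_zero, Matrix.cons_val_one]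
    constructor <;> rintro ⟨h₁, h₂⟩ <;> constructor <;> linarith
  have hnonneg : ∀ (μ : Fin 2 → ℝ) x, μ 0 * fL x + μ 1 * fU x ≥
      μ 0 * fL xs + μ 1 * fU xs - μ 0 * εU - μ 1 * εL ↔ 0 ≤ ∑ i, μ i * g i x := fun μ x => by
    simp only [Fin.sum_univ_two, g, Matrix.cons_val_zero, Matrix.cons_val_one]
    constructor <;> intro h <;> linarith
  simp_rw [hneg, ← exists_mem_stdSimplex_fin_two_iff, hnonneg]
  exact not_exists_forall_neg_iff_exists_mem_stdSimplex hX hg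

theorem weakly_E_LU_scalarization (n : ℕ) (fL fU : (Fin n → ℝ) → ℝ)
    (hfL : ConvexOn ℝ Set.univ fL) (hfU : ConvexOn ℝ Set.univ fU)
    (hf : ∀ x, fL x ≤ fU x) (X : Set (Fin n → ℝ)) (hX : Convex ℝ X)
    (εL εU : ℝ) (hεL : 0 ≤ εL) (hε : εL ≤ εU) (xs : Fin n → ℝ) (hxs : xs ∈ X) :
    (¬ ∃ x ∈ X, fL x < fL xs - εU ∧ fU x < fU xs - εL) ↔
    (∃ μL μU : ℝ, 0 ≤ μL ∧ 0 ≤ μU ∧ μL + μU = 1 ∧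
      ∀ x ∈ X, μL * fL x + μU * fU x ≥
        μL * fL xs + μU * fU xs - μL * εU - μU * εL) :=
  weakly_E_LU_scalarization_general n fL fU hfL hfU X hX εL εU xs
end

section
/- Let fL, fU : ℝⁿ → ℝ with fL ≤ fU pointwise, X ⊆ ℝⁿ, 0 ≤ εL ≤ εU, and x* ∈ X. Define X(x*, E) = {x ∈ ℝⁿ : fL(x) ≤ fL(x*) − εU and fU(x) ≤ fU(x*) − εL}. Then x* is an E-LU-solution (no x ∈ X with both inequalities holding and at least one strict) if and only if either X ∩ X(x*, E) = ∅, or fL(x) + fU(x) = fL(x*) + fU(x*) − εU − εL for all x ∈ X ∩ X(x*, E). -/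
theorem E_LU_solution_characterization (n : ℕ) (fL fU : (Fin n → ℝ) → ℝ)
    (hf : ∀ x, fL x ≤ fU x) (X : Set (Fin n → ℝ)) (εL εU : ℝ)
    (hεL : 0 ≤ εL) (hε : εL ≤ εU) (xs : Fin n → ℝ) (hxs : xs ∈ X) :
    (¬ ∃ x ∈ X, (fL x ≤ fL xs - εU ∧ fU x ≤ fU xs - εL) ∧
        (fL x, fU x) ≠ (fL xs - εU, fU xs - εL)) ↔
    (X ∩ {x | fL x ≤ fL xs - εU ∧ fU x ≤ fU xs - εL} = ∅ ∨
      ∀ x ∈ X ∩ {x | fL x ≤ fL xs - εU ∧ fU x ≤ fU xs - εL},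
        fL x + fU x = fL xs + fU xs - εU - εL) := by
  constructor
  · intro h
    right
    rintro x ⟨hxX, h1, h2⟩
    by_contra hne
    exact h ⟨x, hxX, ⟨h1, h2⟩, fun heq => by
      rw [Prod.mk.injEq] at heq
      exact hne (by rw [heq.1, heq.2]; ring)⟩
  · rintro (hemp | hsum) ⟨x, hxX, ⟨h1, h2⟩, hne⟩
    · exact Set.eq_empty_iff_forall_notMem.mp hemp x ⟨hxX, h1, h2⟩
    · have := hsum x ⟨hxX, h1, h2⟩
      have e1 : fL x = fL xs - εU := by linarith
      have e2 : fU x = fU xs - εL := by linarith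
      exact hne (by rw [e1, e2])
end

section
/- Let fL, fU : ℝⁿ → ℝ be convex functions with fL ≤ fU pointwise, g_j : ℝⁿ → ℝ convex for j = 1,…,m, X = {x : g_j(x) ≤ 0 for all j}, 0 ≤ εL ≤ εU, and x* ∈ X. Suppose there exist μL, μU ≥ 0 with μL + μU > 0, λ_j ≥ 0 with λ_j g_j(x*) = 0 for all j, subgradients zL ∈ ∂fL(x*), zU ∈ ∂fU(x*), u_j ∈ ∂g_j(x*), and b ∈ ℝⁿ with ‖b‖ ≤ 1, such that μL·zL + μU·zU + Σ_j λ_j·u_j + (μL·εU + μU·εL)·b = 0. Then x* is a weakly E-quasi-LU-solution of the problem: there is no x ∈ X with fL(x) < fL(x*) − εU‖x − x*‖ and fU(x) < fU(x*) − εL‖x − x*‖. -/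
/-!
Pair the stationarity equation with `d = x - x*` for a hypothetical better feasible point `x`.
The subgradient inequalities bound `μL⟪zL, d⟫ + μU⟪zU, d⟫` strictly above by
`-(μL εU + μU εL)‖d‖`, complementary slackness and feasibility of `x` make the multiplier term
nonpositive, and `‖b‖ ≤ 1` bounds the last term by `(μL εU + μU εL)‖d‖`; the sum would then be
negative rather than zero.
-/

/-- The convex subdifferential of φ at x*. -/
def subdiff {n : ℕ} (φ : EuclideanSpace ℝ (Fin n) → ℝ)
    (xs : EuclideanSpace ℝ (Fin n)) : Set (EuclideanSpace ℝ (Fin n)) :=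
  {v | ∀ x, φ x - φ xs ≥ (inner ℝ v (x - xs) : ℝ)}

open Finset

theorem mul_add_mul_lt_mul_add_mul_of_add_pos {a b c d μ ν : ℝ} (hμ : 0 ≤ μ) (hν : 0 ≤ ν)
    (hμν : 0 < μ + ν) (hac : a < c) (hbd : b < d) : μ * a + ν * b < μ * c + ν * d := by
  rcases hμ.eq_or_lt with rfl | hμ
  · have hν : 0 < ν := by linarith
    simpa using mul_lt_mul_of_pos_left hbd hν
  · exact add_lt_add_of_lt_of_le (mul_lt_mul_of_pos_left hac hμ)
      (mul_le_mul_of_nonneg_left hbd.le hν)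

theorem sum_mul_inner_subdiff_nonpos {n : ℕ} {ι : Type*} [Fintype ι]
    {g : ι → EuclideanSpace ℝ (Fin n) → ℝ} {lam : ι → ℝ} {u : ι → EuclideanSpace ℝ (Fin n)}
    {xs x : EuclideanSpace ℝ (Fin n)} (hlam : ∀ j, 0 ≤ lam j) (hcomp : ∀ j, lam j * g j xs = 0)
    (hu : ∀ j, u j ∈ subdiff (g j) xs) (hx : ∀ j, g j x ≤ 0) :
    ∑ j, lam j * inner ℝ (u j) (x - xs) ≤ 0 := by
  refine sum_nonpos fun j _ => ?_
  calc lam j * inner ℝ (u j) (x - xs) ≤ lam j * (g j x - g j xs) :=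
        mul_le_mul_of_nonneg_left (hu j x) (hlam j)
    _ = lam j * g j x := by rw [mul_sub, hcomp j, sub_zero]
    _ ≤ 0 := mul_nonpos_of_nonneg_of_nonpos (hlam j) (hx j)

theorem KKT_sufficient_weakly_E_quasi_LU_general (n m : ℕ)
    (fL fU : EuclideanSpace ℝ (Fin n) → ℝ)
    (g : Fin m → EuclideanSpace ℝ (Fin n) → ℝ)
    (εL εU : ℝ) (hεL : 0 ≤ εL) (hε : εL ≤ εU)
    (xs : EuclideanSpace ℝ (Fin n))
    (μL μU : ℝ) (hμL : 0 ≤ μL) (hμU : 0 ≤ μU) (hμ : 0 < μL + μU)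
    (lam : Fin m → ℝ) (hlam : ∀ j, 0 ≤ lam j) (hcomp : ∀ j, lam j * g j xs = 0)
    (zL zU : EuclideanSpace ℝ (Fin n)) (hzL : zL ∈ subdiff fL xs) (hzU : zU ∈ subdiff fU xs)
    (u : Fin m → EuclideanSpace ℝ (Fin n)) (hu : ∀ j, u j ∈ subdiff (g j) xs)
    (b : EuclideanSpace ℝ (Fin n)) (hb : ‖b‖ ≤ 1)
    (heq : μL • zL + μU • zU + ∑ j, lam j • u j + (μL * εU + μU * εL) • b = 0) :
    ¬ ∃ x, (∀ j, g j x ≤ 0) ∧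
      fL x < fL xs - εU * ‖x - xs‖ ∧ fU x < fU xs - εL * ‖x - xs‖ := by
  rintro ⟨x, hgx, hLx, hUx⟩
  set c := μL * εU + μU * εL
  have hstat : μL * inner ℝ zL (x - xs) + μU * inner ℝ zU (x - xs)
      + ∑ j, lam j * inner ℝ (u j) (x - xs) + c * inner ℝ b (x - xs) = 0 := by
    simpa only [inner_add_left, sum_inner, real_inner_smul_left, inner_zero_left] using
      congrArg (inner ℝ · (x - xs)) heq
  have hobj : μL * inner ℝ zL (x - xs) + μU * inner ℝ zU (x - xs)
      < μL * -(εU * ‖x - xs‖) + μU * -(εL * ‖x - xs‖) :=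
    mul_add_mul_lt_mul_add_mul_of_add_pos hμL hμU hμ ((hzL x).trans_lt (by linarith))
      ((hzU x).trans_lt (by linarith))
  have hmult := sum_mul_inner_subdiff_nonpos hlam hcomp hu hgx
  have hc : 0 ≤ c := by have := hεL.trans hε; positivity
  have hbd : c * inner ℝ b (x - xs) ≤ c * ‖x - xs‖ :=
    mul_le_mul_of_nonneg_left
      ((real_inner_le_norm b _).trans (mul_le_of_le_one_left (norm_nonneg _) hb)) hc
  linarith

theorem KKT_sufficient_weakly_E_quasi_LU (n m : ℕ)
    (fL fU : EuclideanSpace ℝ (Fin n) → ℝ)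
    (hfL : ConvexOn ℝ Set.univ fL) (hfU : ConvexOn ℝ Set.univ fU)
    (hf : ∀ x, fL x ≤ fU x)
    (g : Fin m → EuclideanSpace ℝ (Fin n) → ℝ)
    (hg : ∀ j, ConvexOn ℝ Set.univ (g j))
    (εL εU : ℝ) (hεL : 0 ≤ εL) (hε : εL ≤ εU)
    (xs : EuclideanSpace ℝ (Fin n)) (hxs : ∀ j, g j xs ≤ 0)
    (μL μU : ℝ) (hμL : 0 ≤ μL) (hμU : 0 ≤ μU) (hμ : 0 < μL + μU)
    (lam : Fin m → ℝ) (hlam : ∀ j, 0 ≤ lam j) (hcomp : ∀ j, lam j * g j xs = 0)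
    (zL zU : EuclideanSpace ℝ (Fin n)) (hzL : zL ∈ subdiff fL xs) (hzU : zU ∈ subdiff fU xs)
    (u : Fin m → EuclideanSpace ℝ (Fin n)) (hu : ∀ j, u j ∈ subdiff (g j) xs)
    (b : EuclideanSpace ℝ (Fin n)) (hb : ‖b‖ ≤ 1)
    (heq : μL • zL + μU • zU + ∑ j, lam j • u j + (μL * εU + μU * εL) • b = 0) :
    ¬ ∃ x, (∀ j, g j x ≤ 0) ∧
      fL x < fL xs - εU * ‖x - xs‖ ∧ fU x < fU xs - εL * ‖x - xs‖ :=
  KKT_sufficient_weakly_E_quasi_LU_general n m fL fU g εL εU hεL hε xs μL μU hμL hμU hμ lam hlam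
    hcomp zL zU hzL hzU u hu b hb heq
end

section
/- Let fL, fU : ℝⁿ → ℝ be strictly convex functions with fL ≤ fU pointwise, g_j : ℝⁿ → ℝ convex, X = {x : g_j(x) ≤ 0 ∀j}, 0 ≤ εL ≤ εU, and x* ∈ X. Suppose there exist μL, μU ≥ 0 with μL + μU > 0, λ_j ≥ 0 with λ_j g_j(x*) = 0, zL ∈ ∂fL(x*), zU ∈ ∂fU(x*), u_j ∈ ∂g_j(x*), and b with ‖b‖ ≤ 1, such that μL·zL + μU·zU + Σ_j λ_j u_j + (μL·εU + μU·εL)·b = 0. Then x* is an E-quasi-LU-solution: there is no x ∈ X with fL(x) ≤ fL(x*) − εU‖x − x*‖ and fU(x) ≤ fU(x*) − εL‖x − x*‖ with at least one of the two inequalities strict. -/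
/-!
Pair the multiplier identity with `d = x - x*` for a competitor `x`. Strict convexity makes both
`⟪zL, d⟫ + εU‖d‖` and `⟪zU, d⟫ + εL‖d‖` negative as soon as `x ≠ x*`; complementary slackness
makes every `λⱼ⟪uⱼ, d⟫` nonpositive, and `‖b‖ ≤ 1` bounds `⟪b, d⟫` by `‖d‖`. Hence the paired
identity reads `0 < 0`.
-/

open RealInnerProductSpace

section

variable {n : ℕ}

/-- Compare the subgradient inequality at the midpoint of `x*` and `x` with strict convexity. -/
theorem StrictConvexOn.inner_lt_sub_of_mem_subdiff {φ : EuclideanSpace ℝ (Fin n) → ℝ}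
    (hφ : StrictConvexOn ℝ Set.univ φ) {xs v x : EuclideanSpace ℝ (Fin n)}
    (hv : v ∈ subdiff φ xs) (hx : x ≠ xs) :
    ⟪v, x - xs⟫ < φ x - φ xs := by
  have hmid := hφ.2 (Set.mem_univ x) (Set.mem_univ xs) hx
    (by norm_num : (0 : ℝ) < 1 / 2) (by norm_num : (0 : ℝ) < 1 / 2) (by norm_num)
  have hsub := hv ((1 / 2 : ℝ) • x + (1 / 2 : ℝ) • xs)
  rw [show ((1 / 2 : ℝ) • x + (1 / 2 : ℝ) • xs) - xs = (1 / 2 : ℝ) • (x - xs) by module,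
    real_inner_smul_right] at hsub
  simp only [smul_eq_mul] at hmid
  linarith

theorem sum_mul_inner_nonpos_of_mem_subdiff {ι : Type*} [Fintype ι]
    {g : ι → EuclideanSpace ℝ (Fin n) → ℝ} {lam : ι → ℝ} {u : ι → EuclideanSpace ℝ (Fin n)}
    {xs x : EuclideanSpace ℝ (Fin n)} (hlam : ∀ j, 0 ≤ lam j) (hcomp : ∀ j, lam j * g j xs = 0)
    (hu : ∀ j, u j ∈ subdiff (g j) xs) (hx : ∀ j, g j x ≤ 0) :
    ∑ j, lam j * ⟪u j, x - xs⟫ ≤ 0 :=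
  Finset.sum_nonpos fun j _ => by nlinarith [hu j x, hlam j, hcomp j, hx j]

end

theorem real_inner_le_norm_of_norm_le_one {E : Type*} [NormedAddCommGroup E]
    [InnerProductSpace ℝ E] {b : E} (hb : ‖b‖ ≤ 1) (d : E) : ⟪b, d⟫ ≤ ‖d‖ :=
  (real_inner_le_norm b d).trans (mul_le_of_le_one_left (norm_nonneg d) hb)

theorem mul_add_mul_neg_of_neg {μ ν a c : ℝ} (hμ : 0 ≤ μ) (hν : 0 ≤ ν) (h : 0 < μ + ν)
    (ha : a < 0) (hc : c < 0) : μ * a + ν * c < 0 := by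
  rcases hμ.lt_or_eq with hμ | rfl
  · nlinarith [mul_neg_of_pos_of_neg hμ ha, mul_nonpos_of_nonneg_of_nonpos hν hc.le]
  · nlinarith [mul_neg_of_pos_of_neg (by simpa using h : 0 < ν) hc]

theorem KKT_sufficient_E_quasi_LU_general (n m : ℕ)
    (fL fU : EuclideanSpace ℝ (Fin n) → ℝ)
    (hfL : StrictConvexOn ℝ Set.univ fL) (hfU : StrictConvexOn ℝ Set.univ fU)
    (g : Fin m → EuclideanSpace ℝ (Fin n) → ℝ)
    (εL εU : ℝ) (hεL : 0 ≤ εL) (hε : εL ≤ εU)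
    (xs : EuclideanSpace ℝ (Fin n))
    (μL μU : ℝ) (hμL : 0 ≤ μL) (hμU : 0 ≤ μU) (hμ : 0 < μL + μU)
    (lam : Fin m → ℝ) (hlam : ∀ j, 0 ≤ lam j) (hcomp : ∀ j, lam j * g j xs = 0)
    (zL zU : EuclideanSpace ℝ (Fin n)) (hzL : zL ∈ subdiff fL xs) (hzU : zU ∈ subdiff fU xs)
    (u : Fin m → EuclideanSpace ℝ (Fin n)) (hu : ∀ j, u j ∈ subdiff (g j) xs)
    (b : EuclideanSpace ℝ (Fin n)) (hb : ‖b‖ ≤ 1)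
    (heq : μL • zL + μU • zU + ∑ j, lam j • u j + (μL * εU + μU * εL) • b = 0) :
    ¬ ∃ x, (∀ j, g j x ≤ 0) ∧
      (fL x ≤ fL xs - εU * ‖x - xs‖ ∧ fU x ≤ fU xs - εL * ‖x - xs‖) ∧
      (fL x < fL xs - εU * ‖x - xs‖ ∨ fU x < fU xs - εL * ‖x - xs‖) := by
  rintro ⟨x, hxX, ⟨hL, hU⟩, hstrict⟩
  have hx : x ≠ xs := by
    rintro rfl
    simp at hstrict
  have hzL' := hfL.inner_lt_sub_of_mem_subdiff hzL hx
  have hzU' := hfU.inner_lt_sub_of_mem_subdiff hzU hx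
  have hslack := sum_mul_inner_nonpos_of_mem_subdiff hlam hcomp hu hxX
  have hb' := real_inner_le_norm_of_norm_le_one hb (x - xs)
  have hpaired : μL * ⟪zL, x - xs⟫ + μU * ⟪zU, x - xs⟫ + ∑ j, lam j * ⟪u j, x - xs⟫
      + (μL * εU + μU * εL) * ⟪b, x - xs⟫ = 0 := by
    simpa only [inner_add_left, real_inner_smul_left, sum_inner, inner_zero_left]
      using congrArg (⟪·, x - xs⟫) heq
  have hcoef : 0 ≤ μL * εU + μU * εL := by nlinarith
  have hneg := mul_add_mul_neg_of_neg hμL hμU hμ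
    (show ⟪zL, x - xs⟫ + εU * ‖x - xs‖ < 0 by linarith)
    (show ⟪zU, x - xs⟫ + εL * ‖x - xs‖ < 0 by linarith)
  linarith [mul_le_mul_of_nonneg_left hb' hcoef]

theorem KKT_sufficient_E_quasi_LU (n m : ℕ)
    (fL fU : EuclideanSpace ℝ (Fin n) → ℝ)
    (hfL : StrictConvexOn ℝ Set.univ fL) (hfU : StrictConvexOn ℝ Set.univ fU)
    (hf : ∀ x, fL x ≤ fU x)
    (g : Fin m → EuclideanSpace ℝ (Fin n) → ℝ)
    (hg : ∀ j, ConvexOn ℝ Set.univ (g j))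
    (εL εU : ℝ) (hεL : 0 ≤ εL) (hε : εL ≤ εU)
    (xs : EuclideanSpace ℝ (Fin n)) (hxs : ∀ j, g j xs ≤ 0)
    (μL μU : ℝ) (hμL : 0 ≤ μL) (hμU : 0 ≤ μU) (hμ : 0 < μL + μU)
    (lam : Fin m → ℝ) (hlam : ∀ j, 0 ≤ lam j) (hcomp : ∀ j, lam j * g j xs = 0)
    (zL zU : EuclideanSpace ℝ (Fin n)) (hzL : zL ∈ subdiff fL xs) (hzU : zU ∈ subdiff fU xs)
    (u : Fin m → EuclideanSpace ℝ (Fin n)) (hu : ∀ j, u j ∈ subdiff (g j) xs)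
    (b : EuclideanSpace ℝ (Fin n)) (hb : ‖b‖ ≤ 1)
    (heq : μL • zL + μU • zU + ∑ j, lam j • u j + (μL * εU + μU * εL) • b = 0) :
    ¬ ∃ x, (∀ j, g j x ≤ 0) ∧
      (fL x ≤ fL xs - εU * ‖x - xs‖ ∧ fU x ≤ fU xs - εL * ‖x - xs‖) ∧
      (fL x < fL xs - εU * ‖x - xs‖ ∨ fU x < fU xs - εL * ‖x - xs‖) :=
  KKT_sufficient_E_quasi_LU_general n m fL fU hfL hfU g εL εU hεL hε xs μL μU hμL hμU hμ lam hlam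
    hcomp zL zU hzL hzU u hu b hb heq
end
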